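/- Let H be a complex Hilbert space, n ≥ 0, and h ∈ H. The creation and annihilation operators satisfy the canonical commutation relation a_{n+2}(h) a_{n+1}†(h) − a_n†(h) a_{n+1}(h) = ‖h‖² I on H^{⊙(n+1)}. -/

import Mathlib

open scoped InnerProductSpace

/-- An abstract presentation of the `n`-fold Hilbert tensor power of `H`:
a Hilbert space `Hn` together with a map `emb` sending `(x 1, …, x n)` to the
elementary tensor `x 1 ⊗ ⋯ ⊗ x n`, such that inner products of elementary
tensors multiply and the elementary tensors span a dense subspace. -/
structure TensorPowerStructure (H Hn : Type*) [NormedAddCommGroup H]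
    [InnerProductSpace ℂ H] [NormedAddCommGroup Hn] [InnerProductSpace ℂ Hn]
    (n : ℕ) where
  emb : (Fin n → H) → Hn
  inner_emb : ∀ x y : Fin n → H, ⟪emb x, emb y⟫_ℂ = ∏ i, ⟪x i, y i⟫_ℂ
  dense_span : Dense ((Submodule.span ℂ (Set.range emb) : Submodule ℂ Hn) : Set Hn)

/-- `Tn` is the `n`-fold tensor power `T^{⊗n}` of `T`, acting as `T` on each
factor of elementary tensors. -/
def IsTensorPowerOp {H Hn : Type*} [NormedAddCommGroup H] [InnerProductSpace ℂ H]
    [NormedAddCommGroup Hn] [InnerProductSpace ℂ Hn] {n : ℕ}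
    (tp : TensorPowerStructure H Hn n) (T : H →L[ℂ] H) (Tn : Hn →L[ℂ] Hn) : Prop :=
  ∀ x : Fin n → H, Tn (tp.emb x) = tp.emb fun i => T (x i)

/-- The symmetric subspace `H^{⊙n}` of the Hilbert tensor power `H^{⊗n}`: the
closed subspace spanned by the symmetric tensors `Σ_{σ ∈ Sₙ} x_{σ(1)} ⊗ ⋯ ⊗ x_{σ(n)}`. -/
def symSubspace {H Hn : Type*} [NormedAddCommGroup H] [InnerProductSpace ℂ H]
    [NormedAddCommGroup Hn] [InnerProductSpace ℂ Hn] {n : ℕ}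
    (tp : TensorPowerStructure H Hn n) : Submodule ℂ Hn :=
  (Submodule.span ℂ
    {y : Hn | ∃ x : Fin n → H,
      y = ∑ σ : Equiv.Perm (Fin n), tp.emb (x ∘ σ)}).topologicalClosure

/-- `C` is the creation operator `aₙ†(h) : H^{⊙n} → H^{⊙(n+1)}`, determined by
`aₙ†(h) (Σ_σ g_{σ(1)} ⊗ ⋯ ⊗ g_{σ(n)}) = (n+1)^{-1/2} Σ_σ Σ_m g_{σ(1)} ⊗ ⋯ ⊗ h ⊗ ⋯ ⊗ g_{σ(n)}`
(inserting `h` in the `m`-th slot). -/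
def IsCreationOp {H Hn Hm : Type*} [NormedAddCommGroup H] [InnerProductSpace ℂ H]
    [NormedAddCommGroup Hn] [InnerProductSpace ℂ Hn]
    [NormedAddCommGroup Hm] [InnerProductSpace ℂ Hm] {n : ℕ}
    (tpn : TensorPowerStructure H Hn n) (tpm : TensorPowerStructure H Hm (n + 1))
    (h : H) (C : ↥(symSubspace tpn) →L[ℂ] ↥(symSubspace tpm)) : Prop :=
  ∀ (g : Fin n → H) (x : symSubspace tpn),
    (x : Hn) = (∑ σ : Equiv.Perm (Fin n), tpn.emb (g ∘ σ)) →
    ((C x : Hm)) = (Real.sqrt (n + 1))⁻¹ •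
      ∑ σ : Equiv.Perm (Fin n), ∑ m : Fin (n + 1),
        tpm.emb (m.insertNth h (g ∘ σ))

/-- `A` is the annihilation operator `a_{n+1}(h) : H^{⊙(n+1)} → H^{⊙n}`, determined by
`a_{n+1}(h)(Σ_σ g_{σ(1)} ⊗ ⋯ ⊗ g_{σ(n+1)}) = (n+1)^{-1/2} Σ_σ Σ_m [g_{σ(m)}, h] g_{σ(1)} ⊗ ⋯ ĝ_{σ(m)} ⋯ ⊗ g_{σ(n+1)}`
(omitting the `m`-th factor). -/
def IsAnnihilationOp {H Hn Hm : Type*} [NormedAddCommGroup H] [InnerProductSpace ℂ H]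
    [NormedAddCommGroup Hn] [InnerProductSpace ℂ Hn]
    [NormedAddCommGroup Hm] [InnerProductSpace ℂ Hm] {n : ℕ}
    (tpm : TensorPowerStructure H Hm (n + 1)) (tpn : TensorPowerStructure H Hn n)
    (h : H) (A : ↥(symSubspace tpm) →L[ℂ] ↥(symSubspace tpn)) : Prop :=
  ∀ (g : Fin (n + 1) → H) (x : symSubspace tpm),
    (x : Hm) = (∑ σ : Equiv.Perm (Fin (n + 1)), tpm.emb (g ∘ σ)) →
    ((A x : Hn)) = (Real.sqrt (n + 1))⁻¹ •
      ∑ σ : Equiv.Perm (Fin (n + 1)), ∑ m : Fin (n + 1),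
        ⟪h, g (σ m)⟫_ℂ • tpn.emb (fun i => g (σ (m.succAbove i)))


/-!
On a symmetric tensor `S g = ∑_σ g_{σ 1} ⊗ ⋯ ⊗ g_{σ k}` both ladder operators are explicit:
`a†(h) S g = (k + 1)^{-1/2} S (h, g)` and `a(h) S g = √k ∑_p ⟪h, g_p⟫ S (g without g_p)`, the
factor `k` because each of the `k` contraction slots contributes the same sum after reindexing
the permutations. So `a(h) a†(h) S g` is `‖h‖² S g`, from contracting against the inserted `h`,
plus the terms `⟪h, g_q⟫ S (h, g without g_q)`, which make up `a†(h) a(h) S g`. The symmetric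
tensors span a dense subspace of `H^{⊙k}` and both sides are continuous, so they agree everywhere.
-/

namespace Fin

open Equiv

variable {k : ℕ}

def permInsert (m p : Fin (k + 1)) (ρ : Perm (Fin k)) : Perm (Fin (k + 1)) :=
  (finSuccEquiv' m).trans ((optionCongr ρ).trans (finSuccEquiv' p).symm)

@[simp]
theorem permInsert_apply_self (m p : Fin (k + 1)) (ρ : Perm (Fin k)) :
    permInsert m p ρ m = p := by
  simp [permInsert]

@[simp]
theorem permInsert_apply_succAbove (m p : Fin (k + 1)) (ρ : Perm (Fin k)) (j : Fin k) :
    permInsert m p ρ (m.succAbove j) = p.succAbove (ρ j) := by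
  simp [permInsert]

theorem permInsert_comp_succAbove (m p : Fin (k + 1)) (ρ : Perm (Fin k)) :
    permInsert m p ρ ∘ m.succAbove = p.succAbove ∘ ρ :=
  funext (permInsert_apply_succAbove m p ρ)

theorem permInsert_symm (m p : Fin (k + 1)) (ρ : Perm (Fin k)) :
    (permInsert m p ρ).symm = permInsert p m ρ.symm := by
  simp [permInsert, Equiv.trans_assoc]

theorem bijective_permInsert (m : Fin (k + 1)) :
    Function.Bijective fun pρ : Fin (k + 1) × Perm (Fin k) => permInsert m pρ.1 pρ.2 := by
  refine (Fintype.bijective_iff_injective_and_card _).2 ⟨?_, ?_⟩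
  · rintro ⟨p, ρ⟩ ⟨p', ρ'⟩ hpρ
    obtain rfl : p = p' := by simpa using DFunLike.congr_fun hpρ m
    refine Prod.ext rfl (Equiv.ext fun j => succAbove_right_injective (p := p) ?_)
    simpa using DFunLike.congr_fun hpρ (m.succAbove j)
  · simp [Fintype.card_perm, Nat.factorial_succ]

theorem sum_perm_eq_sum_permInsert {M : Type*} [AddCommMonoid M] (m : Fin (k + 1))
    (F : Perm (Fin (k + 1)) → M) :
    ∑ τ, F τ = ∑ p, ∑ ρ, F (permInsert m p ρ) := by
  rw [← Fintype.sum_prod_type']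
  exact (Fintype.sum_bijective _ (bijective_permInsert m) _ _ fun _ => rfl).symm

theorem sum_perm_eq_sum_permInsert_target {M : Type*} [AddCommMonoid M] (m : Fin (k + 1))
    (F : Perm (Fin (k + 1)) → M) :
    ∑ τ, F τ = ∑ p, ∑ ρ, F (permInsert p m ρ) := by
  rw [← Equiv.sum_comp (Equiv.inv _), sum_perm_eq_sum_permInsert m]
  refine Finset.sum_congr rfl fun p _ => ?_
  rw [← Equiv.sum_comp (Equiv.inv _)]
  simp [Perm.inv_def, permInsert_symm]

theorem cons_comp_permInsert_zero {α : Type*} (a : α) (g : Fin k → α) (p : Fin (k + 1))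
    (ρ : Perm (Fin k)) : cons a g ∘ permInsert p 0 ρ = p.insertNth a (g ∘ ρ) := by
  rw [eq_insertNth_iff]
  refine ⟨by simp, funext fun j => ?_⟩
  simp [removeNth]

theorem sum_perm_cons {α M : Type*} [AddCommMonoid M] (F : (Fin (k + 1) → α) → M) (a : α)
    (g : Fin k → α) :
    ∑ τ : Perm (Fin (k + 1)), F (cons a g ∘ τ) =
      ∑ p : Fin (k + 1), ∑ ρ : Perm (Fin k), F (p.insertNth a (g ∘ ρ)) := by
  simp only [sum_perm_eq_sum_permInsert_target 0, cons_comp_permInsert_zero]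

theorem sum_perm_sum_succAbove {M : Type*} [AddCommMonoid M]
    (F : Fin (k + 1) → (Fin k → Fin (k + 1)) → M) :
    ∑ σ : Perm (Fin (k + 1)), ∑ m, F (σ m) (σ ∘ m.succAbove) =
      (k + 1) • ∑ p, ∑ ρ : Perm (Fin k), F p (p.succAbove ∘ ρ) := by
  calc _ = ∑ _m : Fin (k + 1), ∑ p, ∑ ρ : Perm (Fin k), F p (p.succAbove ∘ ρ) := by
        rw [Finset.sum_comm]
        refine Finset.sum_congr rfl fun m _ => ?_
        simp only [sum_perm_eq_sum_permInsert m fun σ => F (σ m) (σ ∘ m.succAbove),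
          permInsert_apply_self, permInsert_comp_succAbove]
    _ = _ := by simp

theorem removeNth_succ_cons {α : Type*} (q : Fin (k + 1)) (a : α) (g : Fin (k + 1) → α) :
    removeNth q.succ (cons a g : Fin (k + 2) → α) = cons a (removeNth q g) := by
  ext j
  cases j using Fin.cases <;> simp [removeNth]

end Fin

namespace TensorPowerStructure

variable {H Hk : Type*} [NormedAddCommGroup H] [InnerProductSpace ℂ H]
  [NormedAddCommGroup Hk] [InnerProductSpace ℂ Hk] {k : ℕ}

def symTensor (tp : TensorPowerStructure H Hk k) (g : Fin k → H) : symSubspace tp :=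
  ⟨∑ σ : Equiv.Perm (Fin k), tp.emb (g ∘ σ),
    Submodule.le_topologicalClosure _ (Submodule.subset_span ⟨g, rfl⟩)⟩

@[simp]
theorem coe_symTensor (tp : TensorPowerStructure H Hk k) (g : Fin k → H) :
    (tp.symTensor g : Hk) = ∑ σ : Equiv.Perm (Fin k), tp.emb (g ∘ σ) :=
  rfl

theorem dense_span_range_symTensor (tp : TensorPowerStructure H Hk k) :
    Dense (Submodule.span ℂ (Set.range tp.symTensor) : Set (symSubspace tp)) := by
  rw [Subtype.dense_iff, ← Submodule.coe_subtype, ← Submodule.map_coe, Submodule.map_span]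
  refine (Submodule.topologicalClosure_coe _).subset.trans (closure_mono (Submodule.span_le.2 ?_))
  rintro _ ⟨g, rfl⟩
  exact Submodule.subset_span ⟨tp.symTensor g, ⟨g, rfl⟩, rfl⟩

end TensorPowerStructure

section LadderOperators

open Finset TensorPowerStructure

variable {H Hn Hm : Type*} [NormedAddCommGroup H] [InnerProductSpace ℂ H]
  [NormedAddCommGroup Hn] [InnerProductSpace ℂ Hn]
  [NormedAddCommGroup Hm] [InnerProductSpace ℂ Hm] {n : ℕ}
  {tpn : TensorPowerStructure H Hn n} {tpm : TensorPowerStructure H Hm (n + 1)} {h : H}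

theorem IsCreationOp.apply_symTensor {C : symSubspace tpn →L[ℂ] symSubspace tpm}
    (hC : IsCreationOp tpn tpm h C) (g : Fin n → H) :
    C (tpn.symTensor g) = (√(n + 1))⁻¹ • tpm.symTensor (Fin.cons h g) := by
  ext
  rw [hC g _ rfl, Submodule.coe_smul_of_tower, coe_symTensor, Fin.sum_perm_cons tpm.emb,
    Finset.sum_comm]

theorem IsAnnihilationOp.apply_symTensor {A : symSubspace tpm →L[ℂ] symSubspace tpn}
    (hA : IsAnnihilationOp tpm tpn h A) (g : Fin (n + 1) → H) :
    A (tpm.symTensor g) = √(n + 1) • ∑ p, ⟪h, g p⟫_ℂ • tpn.symTensor (Fin.removeNth p g) := by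
  ext
  calc (A (tpm.symTensor g) : Hn)
      = (√(n + 1))⁻¹ • ((n + 1) • ∑ p, ∑ ρ : Equiv.Perm (Fin n),
          ⟪h, g p⟫_ℂ • tpn.emb (g ∘ p.succAbove ∘ ρ)) :=
        (hA g _ rfl).trans (congrArg _
          (Fin.sum_perm_sum_succAbove fun p τ => ⟪h, g p⟫_ℂ • tpn.emb (g ∘ τ)))
    _ = _ := by
      rw [← Nat.cast_smul_eq_nsmul ℝ, smul_smul, inv_mul_eq_div, Nat.cast_add_one, Real.div_sqrt]
      simp only [Submodule.coe_smul_of_tower, Submodule.coe_sum,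
        coe_symTensor, Finset.smul_sum]
      rfl

variable {Hl : Type*} [NormedAddCommGroup Hl] [InnerProductSpace ℂ Hl]
  {tpl : TensorPowerStructure H Hl (n + 2)}

theorem annihilation_creation_symTensor {C : symSubspace tpm →L[ℂ] symSubspace tpl}
    {A : symSubspace tpl →L[ℂ] symSubspace tpm} (hC : IsCreationOp tpm tpl h C)
    (hA : IsAnnihilationOp tpl tpm h A) (g : Fin (n + 1) → H) :
    A (C (tpm.symTensor g)) = ((‖h‖ : ℂ) ^ 2) • tpm.symTensor g +
      ∑ q, ⟪h, g q⟫_ℂ • tpm.symTensor (Fin.cons h (Fin.removeNth q g)) := by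
  rw [hC.apply_symTensor, ContinuousLinearMap.map_smul_of_tower, hA.apply_symTensor,
    inv_smul_smul₀ (by positivity), Fin.sum_univ_succ]
  simp [Fin.removeNth_succ_cons, inner_self_eq_norm_sq_to_K]

theorem creation_annihilation_symTensor {C : symSubspace tpn →L[ℂ] symSubspace tpm}
    {A : symSubspace tpm →L[ℂ] symSubspace tpn} (hC : IsCreationOp tpn tpm h C)
    (hA : IsAnnihilationOp tpm tpn h A) (g : Fin (n + 1) → H) :
    C (A (tpm.symTensor g)) =
      ∑ q, ⟪h, g q⟫_ℂ • tpm.symTensor (Fin.cons h (Fin.removeNth q g)) := by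
  rw [hA.apply_symTensor, ContinuousLinearMap.map_smul_of_tower, map_sum, smul_sum]
  refine sum_congr rfl fun q _ => ?_
  rw [map_smul, hC.apply_symTensor, smul_comm, smul_inv_smul₀ (by positivity)]

end LadderOperators

theorem creation_annihilation_commutation_general
    {H Hn Hm Hl : Type*} [NormedAddCommGroup H] [InnerProductSpace ℂ H]
    [NormedAddCommGroup Hn] [InnerProductSpace ℂ Hn]
    [NormedAddCommGroup Hm] [InnerProductSpace ℂ Hm]
    [NormedAddCommGroup Hl] [InnerProductSpace ℂ Hl]
    {n : ℕ} (tpn : TensorPowerStructure H Hn n)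
    (tpm : TensorPowerStructure H Hm (n + 1))
    (tpl : TensorPowerStructure H Hl (n + 2)) (h : H)
    (C₁ : ↥(symSubspace tpn) →L[ℂ] ↥(symSubspace tpm))
    (A₁ : ↥(symSubspace tpm) →L[ℂ] ↥(symSubspace tpn))
    (C₂ : ↥(symSubspace tpm) →L[ℂ] ↥(symSubspace tpl))
    (A₂ : ↥(symSubspace tpl) →L[ℂ] ↥(symSubspace tpm))
    (hC₁ : IsCreationOp tpn tpm h C₁) (hA₁ : IsAnnihilationOp tpm tpn h A₁)
    (hC₂ : IsCreationOp tpm tpl h C₂) (hA₂ : IsAnnihilationOp tpl tpm h A₂) :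
    ∀ x : symSubspace tpm, A₂ (C₂ x) - C₁ (A₁ x) = ((‖h‖ : ℂ) ^ 2) • x := by
  have hcomm : A₂.comp C₂ - C₁.comp A₁ = ((‖h‖ : ℂ) ^ 2) • ContinuousLinearMap.id ℂ _ := by
    refine ContinuousLinearMap.ext_on tpm.dense_span_range_symTensor ?_
    rintro _ ⟨g, rfl⟩
    simp [annihilation_creation_symTensor hC₂ hA₂, creation_annihilation_symTensor hC₁ hA₁]
  exact fun x => DFunLike.congr_fun hcomm x

/-- The canonical commutation relation
`a_{n+2}(h) a_{n+1}†(h) − aₙ†(h) a_{n+1}(h) = ‖h‖² I` on `H^{⊙(n+1)}`. -/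
theorem creation_annihilation_commutation
    {H Hn Hm Hl : Type*} [NormedAddCommGroup H] [InnerProductSpace ℂ H] [CompleteSpace H]
    [NormedAddCommGroup Hn] [InnerProductSpace ℂ Hn] [CompleteSpace Hn]
    [NormedAddCommGroup Hm] [InnerProductSpace ℂ Hm] [CompleteSpace Hm]
    [NormedAddCommGroup Hl] [InnerProductSpace ℂ Hl] [CompleteSpace Hl]
    {n : ℕ} (tpn : TensorPowerStructure H Hn n)
    (tpm : TensorPowerStructure H Hm (n + 1))
    (tpl : TensorPowerStructure H Hl (n + 2)) (h : H)
    (C₁ : ↥(symSubspace tpn) →L[ℂ] ↥(symSubspace tpm))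
    (A₁ : ↥(symSubspace tpm) →L[ℂ] ↥(symSubspace tpn))
    (C₂ : ↥(symSubspace tpm) →L[ℂ] ↥(symSubspace tpl))
    (A₂ : ↥(symSubspace tpl) →L[ℂ] ↥(symSubspace tpm))
    (hC₁ : IsCreationOp tpn tpm h C₁) (hA₁ : IsAnnihilationOp tpm tpn h A₁)
    (hC₂ : IsCreationOp tpm tpl h C₂) (hA₂ : IsAnnihilationOp tpl tpm h A₂) :
    ∀ x : symSubspace tpm, A₂ (C₂ x) - C₁ (A₁ x) = ((‖h‖ : ℂ) ^ 2) • x :=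
  creation_annihilation_commutation_general tpn tpm tpl h C₁ A₁ C₂ A₂ hC₁ hA₁ hC₂ hA₂
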